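/- If k is a field of characteristic zero and G a finite group, then every character of a finite-dimensional k-linear representation of G that takes values in the rational numbers ℚ ⊆ k in fact takes values in the integers ℤ ⊆ ℚ. -/

import Mathlib

/-!
Every eigenvalue of `ρ g` over an algebraic closure is a root of unity, hence an algebraic
integer, so the character value, being the sum of these eigenvalues, is integral over `ℤ`.
A rational number integral over `ℤ` is an integer, as `ℤ` is integrally closed.
-/

namespace Module.End

lemma HasEigenvalue.pow_eq_one {K V : Type*} [Field K] [AddCommGroup V] [Module K V]
    {f : End K V} {n : ℕ} (hf : f ^ n = 1) {μ : K}
    (hμ : f.HasEigenvalue μ) : μ ^ n = 1 := by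
  obtain ⟨v, hv⟩ := (hμ.pow n).exists_hasEigenvector
  have hv' : (μ ^ n - 1) • v = 0 := by
    rw [sub_smul, ← hv.apply_eq_smul, hf, one_smul, one_apply, sub_self]
  exact sub_eq_zero.1 ((smul_eq_zero.1 hv').resolve_right hv.2)

variable {K V : Type*} [Field K] [AddCommGroup V] [Module K V] [FiniteDimensional K V]

lemma isIntegral_trace_of_pow_eq_one_of_splits {f : End K V} {n : ℕ} (hn : 0 < n)
    (hf : f ^ n = 1) (hsplit : f.charpoly.Splits) : IsIntegral ℤ (LinearMap.trace K V f) := by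
  rw [trace_eq_sum_roots_charpoly_of_splits hsplit]
  refine Multiset.sum_induction _ _ (fun _ _ ↦ IsIntegral.add) isIntegral_zero fun μ hμ ↦ ?_
  have hμn : μ ^ n = 1 :=
    ((hasEigenvalue_iff_isRoot_charpoly f μ).2 (Polynomial.isRoot_of_mem_roots hμ)).pow_eq_one hf
  exact IsIntegral.of_pow hn (hμn ▸ isIntegral_one)

lemma isIntegral_trace_of_pow_eq_one {f : End K V} {n : ℕ} (hn : 0 < n) (hf : f ^ n = 1) :
    IsIntegral ℤ (LinearMap.trace K V f) := by
  let L := AlgebraicClosure K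
  have hfL : f.baseChange L ^ n = 1 := by
    rw [← LinearMap.baseChange_pow, hf, LinearMap.baseChange_one]
  have hint := isIntegral_trace_of_pow_eq_one_of_splits hn hfL (IsAlgClosed.splits _)
  rwa [LinearMap.trace_baseChange, isIntegral_algebraMap_iff (algebraMap K L).injective] at hint

end Module.End

lemma FDRep.isIntegral_character {k G : Type*} [Field k] [Group G] [Finite G] (V : FDRep k G)
    (g : G) : IsIntegral ℤ (V.character g) :=
  Module.End.isIntegral_trace_of_pow_eq_one Nat.card_pos
    (by rw [← map_pow, pow_card_eq_one', map_one])

lemma exists_intCast_eq_of_isIntegral_ratCast {k : Type*} [Field k] [CharZero k] {q : ℚ}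
    (hq : IsIntegral ℤ (q : k)) : ∃ m : ℤ, (q : k) = m := by
  rw [← map_ratCast (algebraMap ℚ k), isIntegral_algebraMap_iff (algebraMap ℚ k).injective,
    IsIntegrallyClosed.isIntegral_iff] at hq
  obtain ⟨m, rfl⟩ := hq
  exact ⟨m, by simp⟩

/-- Over a field `k` of characteristic zero, every character of a finite-dimensional
`k`-linear representation of a finite group that takes rational values in fact takes
integer values. -/
theorem rational_character_is_integer
    (k : Type) [Field k] [CharZero k] (G : Type) [Group G] [Fintype G]
    (V : FDRep k G) (h : ∀ g : G, ∃ q : ℚ, V.character g = (q : k)) :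
    ∀ g : G, ∃ m : ℤ, V.character g = (m : k) := by
  intro g
  obtain ⟨q, hq⟩ := h g
  rw [hq]
  exact exists_intCast_eq_of_isIntegral_ratCast (hq ▸ V.isIntegral_character g)
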